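/- arXiv:2603.23895 — 3 statements merged into one kernel-verified Lean document; each statement's English description precedes it below -/
import Mathlib

section
/- The stabilizer of the matrix η₀ = [[0,1],[1,0]] under the action of GL_2(F) × GL_2(F) on Mat_{2,2}(F) given by (X, (g₁,g₂)) ↦ det(g₁g₂)⁻¹ · g₁ X ᵗg₂ is exactly the subgroup {(g, g*) : g ∈ GL_2(F)}, where g* = w_2 (ᵗg)⁻¹ w_2 and w_2 = [[0,1],[1,0]]. -/
open Matrix

/-- The stabilizer of `η₀ = [[0,1],[1,0]]` under the twisted action
`X ↦ det(g₁g₂)⁻¹ g₁ X ᵗg₂` of `GL_2(F) × GL_2(F)` is exactly `{(g, g*)}` where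
`g* = w₂ (ᵗg)⁻¹ w₂`. -/
theorem stabilizer_eta0 {F : Type*} [Field F]
    (g₁ g₂ : Matrix (Fin 2) (Fin 2) F) (h₁ : IsUnit g₁.det) (h₂ : IsUnit g₂.det) :
    ((g₁ * g₂).det)⁻¹ • (g₁ * (!![0, 1; 1, 0] : Matrix (Fin 2) (Fin 2) F) * g₂ᵀ) =
        (!![0, 1; 1, 0] : Matrix (Fin 2) (Fin 2) F) ↔
      g₂ = !![0, 1; 1, 0] * (g₁ᵀ)⁻¹ * !![0, 1; 1, 0] := by
  obtain ⟨a, b, c, d, rfl⟩ : ∃ a b c d, g₁ = !![a,b;c,d] :=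
    ⟨_, _, _, _, (Matrix.eta_fin_two g₁)⟩
  obtain ⟨e, f, g, h, rfl⟩ : ∃ e f g h, g₂ = !![e,f;g,h] :=
    ⟨_, _, _, _, (Matrix.eta_fin_two g₂)⟩
  rw [Matrix.det_fin_two_of] at h₁ h₂
  have hD₁ : a*d - b*c ≠ 0 := h₁.ne_zero
  have hD₂ : e*h - f*g ≠ 0 := h₂.ne_zero
  have hD : a*d - c*b ≠ 0 := fun hx => hD₁ (by linear_combination hx)
  rw [show (!![e,f;g,h])ᵀ = !![e,g;f,h] by ext i j; fin_cases i <;> fin_cases j <;> rfl,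
    show (!![a,b;c,d])ᵀ = !![a,c;b,d] by ext i j; fin_cases i <;> fin_cases j <;> rfl,
    Matrix.inv_def, Matrix.adjugate_fin_two, Matrix.det_fin_two_of, Ring.inverse_eq_inv,
    Matrix.det_mul, Matrix.det_fin_two_of, Matrix.det_fin_two_of,
    ← Matrix.ext_iff, ← Matrix.ext_iff]
  simp [Fin.forall_fin_two, Matrix.mul_apply, Fin.sum_univ_two, hD₁, hD₂]
  constructor
  · rintro ⟨⟨E1, E2⟩, E3, E4⟩
    field_simp at E2 E3
    have he : e*(a*d-b*c) = a*((e*h-f*g)*(a*d-b*c)) := by linear_combination a*E3 - c*E1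
    have hf : f*(a*d-b*c) = -b*((e*h-f*g)*(a*d-b*c)) := by linear_combination d*E1 - b*E3
    have hg : g*(a*d-b*c) = -c*((e*h-f*g)*(a*d-b*c)) := by linear_combination a*E4 - c*E2
    have hh : h*(a*d-b*c) = d*((e*h-f*g)*(a*d-b*c)) := by linear_combination d*E2 - b*E4
    have h0 : (a*d-b*c) * ((e*h-f*g)*(a*d-b*c)) * (((e*h-f*g)*(a*d-b*c)) - 1) = 0 := by
      linear_combination (-(h*(a*d-b*c)))*he - (a*((e*h-f*g)*(a*d-b*c)))*hh
        + (g*(a*d-b*c))*hf + (-(b*((e*h-f*g)*(a*d-b*c))))*hg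
    have key : (e*h-f*g)*(a*d-b*c) = 1 := by
      have hP : (a*d-b*c) * ((e*h-f*g)*(a*d-b*c)) ≠ 0 :=
        mul_ne_zero hD₁ (mul_ne_zero hD₂ hD₁)
      rcases mul_eq_zero.mp h0 with h' | h'
      · exact absurd h' hP
      · exact sub_eq_zero.mp h'
    refine ⟨⟨?_, ?_⟩, ?_, ?_⟩ <;> field_simp [hD]
    · linear_combination he + a*key
    · linear_combination hf - b*key
    · linear_combination hg - c*key
    · linear_combination hh + d*key
  · rintro ⟨⟨rfl, rfl⟩, rfl, rfl⟩
    rw [show (a * d - c * b)⁻¹ * a * ((a * d - c * b)⁻¹ * d) -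
        -((a * d - c * b)⁻¹ * b) * -((a * d - c * b)⁻¹ * c)
        = (a * d - c * b) * (a * d - c * b)⁻¹ * (a * d - c * b)⁻¹ by ring,
      mul_inv_cancel₀ hD, one_mul]
    refine ⟨⟨by ring, ?_⟩, ?_, by ring⟩ <;>
      · rw [inv_inv]
        field_simp
        ring
end

section
/- For k, j ≥ 1 and n ≥ 2, the characters of irreducible representations of Sp_{2n}(ℂ) with one-row highest weights satisfy χ^{Sp}(k,0,…,0) · χ^{Sp}(j,0,…,0) = χ^{Sp}(k−1,0,…,0) · χ^{Sp}(j−1,0,…,0) + Σ_{p=0}^{min(k,j)} χ^{Sp}(k+j−p, p, 0, …, 0), as symmetric Laurent polynomials in the torus variables. -/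
open Matrix

noncomputable section

/-- The type-`C_n` alternant `det(x_i^{μ_j} − x_i^{−μ_j})` appearing in the Weyl
character formula for `Sp_{2n}(ℂ)`. -/
def spAlt (n : ℕ) (x : Fin n → ℂ) (μ : Fin n → ℤ) : ℂ :=
  Matrix.det (Matrix.of fun i j => x i ^ μ j - x i ^ (-μ j))

/-- The shifted exponent vector `λ + ρ` for the two-row partition `(a, b, 0, …, 0)`
in type `C_n`, where `ρ = (n, n-1, …, 1)`.  By the Weyl character formula,
`χ^{Sp}(a,b) = spAlt n x (spTwoRow n a b) / spAlt n x (spTwoRow n 0 0)`. -/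
def spTwoRow (n : ℕ) (a b : ℤ) : Fin n → ℤ :=
  fun j => (if (j : ℕ) = 0 then a else if (j : ℕ) = 1 then b else 0) + ((n : ℤ) - (j : ℕ))

section Plucker
variable {n : ℕ}

private def DD (A : Matrix (Fin n) (Fin n) ℂ) (i j : Fin n) (u w : Fin n → ℂ) : ℂ :=
  ((A.updateCol i u).updateCol j w).det

private lemma updCol_comm (A : Matrix (Fin n) (Fin n) ℂ) {i j : Fin n} (hij : i ≠ j)
    (u w : Fin n → ℂ) :
    (A.updateCol i u).updateCol j w = (A.updateCol j w).updateCol i u := by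
  ext a b
  by_cases h1 : b = j <;> by_cases h2 : b = i <;>
    simp_all [Matrix.updateCol_apply]

private lemma updCol_collapse (A : Matrix (Fin n) (Fin n) ℂ) (i : Fin n)
    (u v : Fin n → ℂ) :
    (A.updateCol i u).updateCol i v = A.updateCol i v := by
  ext a b
  by_cases h1 : b = i <;> simp_all [Matrix.updateCol_apply]

private lemma cols_span (B : Matrix (Fin n) (Fin n) ℂ) (h : B.det ≠ 0) (v : Fin n → ℂ) :
    v ∈ Submodule.span ℂ (Set.range fun j => (fun i => B i j)) := by
  have hv : v = B.mulVec (B⁻¹.mulVec v) := by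
    rw [Matrix.mulVec_mulVec, Matrix.mul_nonsing_inv _ (Ne.isUnit h), Matrix.one_mulVec]
  rw [hv]
  have : B.mulVec (B⁻¹.mulVec v) = ∑ j, (B⁻¹.mulVec v) j • (fun i => B i j) := by
    funext i
    simp [Matrix.mulVec, dotProduct, Finset.sum_apply, mul_comm]
  rw [this]
  exact Submodule.sum_mem _ fun j _ => Submodule.smul_mem _ _ (Submodule.subset_span ⟨j, rfl⟩)

private lemma DD_add2 (A : Matrix (Fin n) (Fin n) ℂ) (i j : Fin n) (u w w' : Fin n → ℂ) :
    DD A i j u (w + w') = DD A i j u w + DD A i j u w' :=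
  Matrix.det_updateCol_add _ j w w'

private lemma DD_smul2 (A : Matrix (Fin n) (Fin n) ℂ) (i j : Fin n) (u : Fin n → ℂ) (c : ℂ)
    (w : Fin n → ℂ) : DD A i j u (c • w) = c * DD A i j u w :=
  Matrix.det_updateCol_smul _ j c w

private lemma DD_add1 (A : Matrix (Fin n) (Fin n) ℂ) {i j : Fin n} (hij : i ≠ j)
    (u u' w : Fin n → ℂ) : DD A i j (u + u') w = DD A i j u w + DD A i j u' w := by
  unfold DD
  rw [updCol_comm A hij, updCol_comm A hij u, updCol_comm A hij u']
  exact Matrix.det_updateCol_add _ i u u'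

private lemma DD_self (A : Matrix (Fin n) (Fin n) ℂ) {i j : Fin n} (hij : i ≠ j)
    (v : Fin n → ℂ) : DD A i j v v = 0 := by
  refine Matrix.det_zero_of_column_eq hij fun k => ?_
  rw [Matrix.updateCol_ne hij, Matrix.updateCol_self, Matrix.updateCol_self]

private lemma DD_swap (A : Matrix (Fin n) (Fin n) ℂ) {i j : Fin n} (hij : i ≠ j)
    (u w : Fin n → ℂ) : DD A i j w u = - DD A i j u w := by
  have h0 := DD_self A hij (u + w)
  rw [DD_add1 A hij, DD_add2, DD_add2, DD_self A hij, DD_self A hij] at h0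
  linear_combination h0

private lemma DD_col2 (A : Matrix (Fin n) (Fin n) ℂ) {i j l : Fin n} (hij : i ≠ j)
    (hli : l ≠ i) (hlj : l ≠ j) (u : Fin n → ℂ) :
    DD A i j u (fun k => A k l) = 0 := by
  refine Matrix.det_zero_of_column_eq hlj.symm fun k => ?_
  rw [Matrix.updateCol_self, Matrix.updateCol_ne hlj, Matrix.updateCol_ne hli]

private lemma DD_col1 (A : Matrix (Fin n) (Fin n) ℂ) {i j l : Fin n} (hij : i ≠ j)
    (hli : l ≠ i) (hlj : l ≠ j) (w : Fin n → ℂ) :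
    DD A i j (fun k => A k l) w = 0 := by
  rw [DD_swap A hij]
  rw [show DD A i j w (fun k => A k l) = 0 from DD_col2 A hij hli hlj w, neg_zero]

/-- Three-term Plücker relation. -/
private lemma plucker (A : Matrix (Fin n) (Fin n) ℂ) {i j : Fin n} (hij : i ≠ j)
    (u w z t : Fin n → ℂ) :
    DD A i j u w * DD A i j z t - DD A i j u z * DD A i j w t
      + DD A i j u t * DD A i j w z = 0 := by
  classical
  set S : Set (Fin n → ℂ) :=
    {u, w, z} ∪ {c | ∃ l : Fin n, l ≠ i ∧ l ≠ j ∧ c = fun k => A k l} with hS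
  have hu : u ∈ S := Set.mem_union_left _ (by simp)
  have hw : w ∈ S := Set.mem_union_left _ (by simp)
  have hz : z ∈ S := Set.mem_union_left _ (by simp)
  by_cases hV : Submodule.span ℂ S = ⊤
  · have ht : t ∈ Submodule.span ℂ S := by rw [hV]; trivial
    induction ht using Submodule.span_induction with
    | mem s hs =>
      rcases hs with hs | ⟨l, hli, hlj, rfl⟩
      · rcases hs with rfl | rfl | rfl
        · rw [DD_self A hij, DD_swap A hij s w, DD_swap A hij s z]
          ring
        · rw [DD_self A hij, DD_swap A hij s z]
          ring
        · rw [DD_self A hij]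
          ring
      · rw [DD_col2 A hij hli hlj u, DD_col2 A hij hli hlj z, DD_col2 A hij hli hlj w]
        ring
    | zero =>
      have h0 : ∀ v, DD A i j v (0 : Fin n → ℂ) = 0 := by
        intro v
        have := DD_smul2 A i j v 0 0
        simpa using this
      rw [h0, h0, h0]; ring
    | add a b _ _ ha hb =>
      rw [DD_add2, DD_add2, DD_add2]
      linear_combination ha + hb
    | smul c a _ ha =>
      rw [DD_smul2, DD_smul2, DD_smul2]
      linear_combination c * ha
  · have key : ∀ v v', v ∈ S → v' ∈ S → DD A i j v v' = 0 := by
      intro v v' hv hv'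
      by_contra hd
      apply hV
      rw [eq_top_iff]
      intro y _
      have hy := cols_span _ hd y
      refine Submodule.span_le.2 ?_ hy
      rintro c ⟨l, rfl⟩
      show (fun k => ((A.updateCol i v).updateCol j v') k l)
        ∈ (Submodule.span ℂ S : Submodule ℂ (Fin n → ℂ))
      by_cases hlj : l = j
      · have hcol : (fun k => ((A.updateCol i v).updateCol j v') k l) = v' := by
          subst hlj; funext k; rw [Matrix.updateCol_self]
        rw [hcol]
        exact Submodule.subset_span hv'
      · by_cases hli : l = i
        · have hcol : (fun k => ((A.updateCol i v).updateCol j v') k l) = v := by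
            subst hli
            funext k
            rw [Matrix.updateCol_ne hlj, Matrix.updateCol_self]
          rw [hcol]
          exact Submodule.subset_span hv
        · have hcol : (fun k => ((A.updateCol i v).updateCol j v') k l)
              = fun k => A k l := by
            funext k
            rw [Matrix.updateCol_ne hlj, Matrix.updateCol_ne hli]
          rw [hcol]
          exact Submodule.subset_span (Set.mem_union_right _ ⟨l, hli, hlj, rfl⟩)
    rw [key u w hu hw, key u z hu hz, key w z hw hz]
    ring

end Plucker

private lemma sum_det_updateCol {n : ℕ} (M : Matrix (Fin n) (Fin n) ℂ) (d : Fin n → ℂ) :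
    ∑ l, (M.updateCol l fun i => d i * M i l).det = (∑ i, d i) * M.det := by
  classical
  have hprod : ∀ (σ : Equiv.Perm (Fin n)) (l : Fin n),
      (∏ i, (M.updateCol l fun i => d i * M i l) (σ i) i) = d (σ l) * ∏ i, M (σ i) i := by
    intro σ l
    rw [← Finset.mul_prod_erase Finset.univ _ (Finset.mem_univ l),
        ← Finset.mul_prod_erase Finset.univ (fun i => M (σ i) i) (Finset.mem_univ l)]
    rw [Matrix.updateCol_self]
    rw [Finset.prod_congr rfl (fun i hi => ?_)]
    · ring
    · exact Matrix.updateCol_ne (Finset.ne_of_mem_erase hi)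
  simp only [Matrix.det_apply]
  rw [Finset.sum_comm]
  rw [Finset.mul_sum]
  refine Finset.sum_congr rfl fun σ _ => ?_
  simp only [hprod]
  rw [← Finset.smul_sum, ← Finset.sum_mul, Equiv.sum_comp σ d, mul_smul_comm]
section SpLayer

variable (n : ℕ) (x : Fin n → ℂ)

private def spE (m : ℤ) : Fin n → ℂ := fun i => x i ^ m - x i ^ (-m)

private def spBase : Matrix (Fin n) (Fin n) ℂ :=
  Matrix.of fun i j => spE n x ((n : ℤ) - (j : ℕ)) i

variable {n x}

private lemma spE_congr {m m' : ℤ} (h : m = m') : spE n x m = spE n x m' := by rw [h]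

private lemma spAlt_twoRow (hn : 2 ≤ n) (a b : ℤ) :
    spAlt n x (spTwoRow n a b) =
      DD (spBase n x) ⟨0, by omega⟩ ⟨1, by omega⟩ (spE n x (a + n)) (spE n x (b + n - 1)) := by
  unfold spAlt DD
  congr 1
  ext i jj
  by_cases h0 : jj = (⟨0, by omega⟩ : Fin n)
  · subst h0
    rw [Matrix.updateCol_ne (by simp [Fin.ext_iff]), Matrix.updateCol_self]
    simp only [Matrix.of_apply, spTwoRow, spE]
    norm_num
  · by_cases h1 : jj = (⟨1, by omega⟩ : Fin n)
    · subst h1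
      rw [Matrix.updateCol_self]
      simp only [Matrix.of_apply, spTwoRow, spE]
      norm_num
      congr 1 <;> congr 1 <;> ring
    · rw [Matrix.updateCol_ne h1, Matrix.updateCol_ne h0]
      have hv0 : (jj : ℕ) ≠ 0 := fun h => h0 (Fin.ext h)
      have hv1 : (jj : ℕ) ≠ 1 := fun h => h1 (Fin.ext h)
      simp only [Matrix.of_apply, spTwoRow, spBase, spE, if_neg hv0, if_neg hv1]
      norm_num

private lemma spE_zero : spE n x 0 = 0 := by
  funext k; simp [spE]

private lemma spR1 (hn : 2 ≤ n) (hx : ∀ i, x i ≠ 0) (a : ℤ) :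
    spAlt n x (spTwoRow n (a+1) 0) + spAlt n x (spTwoRow n (a-1) 0)
      + spAlt n x (spTwoRow n a 1)
    = (∑ i, (x i + (x i)⁻¹)) * spAlt n x (spTwoRow n a 0) := by
  classical
  set i0 : Fin n := ⟨0, by omega⟩ with hi0
  set i1 : Fin n := ⟨1, by omega⟩ with hi1
  have h01 : i0 ≠ i1 := by simp [hi0, hi1, Fin.ext_iff]
  set d : Fin n → ℂ := fun i => x i + (x i)⁻¹ with hd
  set B := spBase n x with hB
  set M : Matrix (Fin n) (Fin n) ℂ :=
    (B.updateCol i0 (spE n x (a + n))).updateCol i1 (spE n x ((n:ℤ) - 1)) with hM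
  have hMcol : ∀ l : Fin n, (fun k => M k l) =
      spE n x (if l = i0 then a + (n:ℤ) else (n:ℤ) - (l:ℕ)) := by
    intro l
    funext k
    by_cases hl1 : l = i1
    · subst hl1
      rw [hM, Matrix.updateCol_self, if_neg (h01 ∘ Eq.symm)]
      have hv1 : ((i1 : Fin n) : ℕ) = 1 := rfl
      rw [hv1, Nat.cast_one]
    · by_cases hl0 : l = i0
      · subst hl0
        rw [hM, Matrix.updateCol_ne hl1, Matrix.updateCol_self, if_pos rfl]
      · rw [hM, Matrix.updateCol_ne hl1, Matrix.updateCol_ne hl0, if_neg hl0]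
        rfl
  have hde : ∀ (m : ℤ) (k : Fin n), d k * spE n x m k
      = spE n x (m+1) k + spE n x (m-1) k := by
    intro m k
    have hk := hx k
    have hm : x k ^ m ≠ 0 := zpow_ne_zero m hk
    simp only [spE, hd]
    rw [show -(m+1) = -m - 1 by ring, show -(m-1) = -m + 1 by ring,
        zpow_add_one₀ hk, zpow_add_one₀ hk, zpow_sub_one₀ hk, zpow_sub_one₀ hk]
    simp only [_root_.zpow_neg]
    field_simp
    ring
  have hscaled : ∀ l : Fin n, (fun k => d k * M k l) =
      spE n x ((if l = i0 then a + (n:ℤ) else (n:ℤ) - (l:ℕ)) + 1)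
        + spE n x ((if l = i0 then a + (n:ℤ) else (n:ℤ) - (l:ℕ)) - 1) := by
    intro l
    funext k
    have hc := congrFun (hMcol l) k
    rw [Pi.add_apply, ← hde, hc]
  have hvanish : ∀ l ∈ (Finset.univ : Finset (Fin n)),
      l ∉ ({i0, i1} : Finset (Fin n)) →
      (M.updateCol l fun k => d k * M k l).det = 0 := by
    intro l _ hl
    simp only [Finset.mem_insert, Finset.mem_singleton] at hl
    push_neg at hl
    obtain ⟨hl0, hl1⟩ := hl
    have hlv : 2 ≤ (l : ℕ) := by
      have e0 : (l : ℕ) ≠ 0 := fun h => hl0 (Fin.ext (by simp [hi0, h]))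
      have e1 : (l : ℕ) ≠ 1 := fun h => hl1 (Fin.ext (by simp [hi1, h]))
      omega
    rw [hscaled, if_neg hl0, Matrix.det_updateCol_add]
    have hup : spE n x ((n:ℤ) - (l:ℕ) + 1) = fun k => M k ⟨(l:ℕ)-1, by omega⟩ := by
      rw [hMcol, if_neg (by simp [hi0, Fin.ext_iff]; omega)]
      apply spE_congr
      have : ((⟨(l:ℕ)-1, by omega⟩ : Fin n) : ℕ) = (l:ℕ) - 1 := rfl
      rw [this]
      omega
    have hupne : (⟨(l:ℕ)-1, by omega⟩ : Fin n) ≠ l := by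
      intro hh
      have := congrArg Fin.val hh
      simp only [] at this
      omega
    rw [hup, Matrix.det_updateCol_eq_zero hupne]
    by_cases hlast : (l : ℕ) = n - 1
    · have hdn : spE n x ((n:ℤ) - (l:ℕ) - 1) = 0 := by
        rw [show (n:ℤ) - (l:ℕ) - 1 = 0 by omega]
        exact spE_zero
      rw [hdn, Matrix.det_eq_zero_of_column_eq_zero l (fun i => by
        rw [Matrix.updateCol_self]; rfl)]
      ring
    · have hdn : spE n x ((n:ℤ) - (l:ℕ) - 1) = fun k => M k ⟨(l:ℕ)+1, by omega⟩ := by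
        rw [hMcol, if_neg (by simp [hi0, Fin.ext_iff])]
        apply spE_congr
        have : ((⟨(l:ℕ)+1, by omega⟩ : Fin n) : ℕ) = (l:ℕ) + 1 := rfl
        rw [this]
        omega
      have hdnne : (⟨(l:ℕ)+1, by omega⟩ : Fin n) ≠ l := by
        intro hh
        have := congrArg Fin.val hh
        simp only [] at this
        omega
      rw [hdn, Matrix.det_updateCol_eq_zero hdnne]
      ring
  have hsum := sum_det_updateCol M d
  rw [← Finset.sum_subset (Finset.subset_univ ({i0, i1} : Finset (Fin n))) hvanish] at hsum
  rw [Finset.sum_pair h01] at hsum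
  -- evaluate the i0 term
  have hFi0 : (M.updateCol i0 fun k => d k * M k i0).det
      = spAlt n x (spTwoRow n (a+1) 0) + spAlt n x (spTwoRow n (a-1) 0) := by
    rw [hscaled, if_pos rfl, Matrix.det_updateCol_add]
    have hcoll : ∀ v : Fin n → ℂ, M.updateCol i0 v
        = (B.updateCol i0 v).updateCol i1 (spE n x ((n:ℤ) - 1)) := by
      intro v
      rw [hM, updCol_comm B h01, updCol_collapse, ← updCol_comm B h01]
    rw [hcoll, hcoll]
    rw [spAlt_twoRow hn (a+1) 0, spAlt_twoRow hn (a-1) 0]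
    unfold DD
    rw [spE_congr (show a + (n:ℤ) + 1 = (a+1) + n by ring),
        spE_congr (show a + (n:ℤ) - 1 = (a-1) + n by ring),
        spE_congr (show (0:ℤ) + n - 1 = (n:ℤ) - 1 by ring)]
  -- evaluate the i1 term
  have hFi1 : (M.updateCol i1 fun k => d k * M k i1).det
      = spAlt n x (spTwoRow n a 1) := by
    rw [hscaled, if_neg (h01 ∘ Eq.symm), Matrix.det_updateCol_add]
    have hcoll : ∀ v : Fin n → ℂ, M.updateCol i1 v
        = (B.updateCol i0 (spE n x (a + n))).updateCol i1 v := by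
      intro v
      rw [hM, updCol_collapse]
    rw [hcoll, hcoll]
    have hv1 : ((i1 : Fin n) : ℕ) = 1 := rfl
    rw [hv1]
    -- up term
    have hup : ((B.updateCol i0 (spE n x (a + n))).updateCol i1
        (spE n x ((n:ℤ) - (1:ℕ) + 1))).det = spAlt n x (spTwoRow n a 1) := by
      rw [spAlt_twoRow hn a 1]
      unfold DD
      rw [spE_congr (show (n:ℤ) - (1:ℕ) + 1 = (1:ℤ) + n - 1 by push_cast; ring)]
    -- down term vanishes
    have hdn : ((B.updateCol i0 (spE n x (a + n))).updateCol i1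
        (spE n x ((n:ℤ) - (1:ℕ) - 1))).det = 0 := by
      by_cases h2 : n = 2
      · have : spE n x ((n:ℤ) - (1:ℕ) - 1) = 0 := by
          rw [show (n:ℤ) - (1:ℕ) - 1 = 0 by push_cast; omega]
          exact spE_zero
        rw [this]
        exact Matrix.det_eq_zero_of_column_eq_zero i1 (fun i => by
          rw [Matrix.updateCol_self]; rfl)
      · -- n ≥ 3 : equals column ⟨2⟩ of the matrix
        have h3 : 3 ≤ n := by omega
        have hMup : (B.updateCol i0 (spE n x (a + n))).updateCol i1
            (spE n x ((n:ℤ) - (1:ℕ) - 1)) = M.updateCol i1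
            (spE n x ((n:ℤ) - (1:ℕ) - 1)) := by rw [hM, updCol_collapse]
        rw [hMup]
        have hcol2 : spE n x ((n:ℤ) - (1:ℕ) - 1) = fun k => M k ⟨2, by omega⟩ := by
          rw [hMcol, if_neg (by simp [hi0, Fin.ext_iff])]
          apply spE_congr
          have : ((⟨2, by omega⟩ : Fin n) : ℕ) = 2 := rfl
          rw [this]
          push_cast
          ring
        have hne2 : (⟨2, by omega⟩ : Fin n) ≠ i1 := by
          simp [hi1, Fin.ext_iff]
        rw [hcol2, Matrix.det_updateCol_eq_zero hne2]
    rw [hup, hdn, add_zero]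
  rw [hFi0, hFi1] at hsum
  have hMdet : M.det = spAlt n x (spTwoRow n a 0) := by
    rw [spAlt_twoRow hn a 0]
    unfold DD
    rw [hM, spE_congr (show (0:ℤ) + n - 1 = (n:ℤ) - 1 by ring)]
  rw [hMdet] at hsum
  rw [← hsum]

private lemma spT_congr {a a' b b' : ℤ} (ha : a = a') (hb : b = b') :
    spAlt n x (spTwoRow n a b) = spAlt n x (spTwoRow n a' b') := by rw [ha, hb]

private lemma bridge' (hn : 2 ≤ n) (p q a b : ℤ) (hpa : p = a + (n:ℤ))
    (hqb : q = b + (n:ℤ) - 1) :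
    DD (spBase n x) ⟨0, by omega⟩ ⟨1, by omega⟩ (spE n x p) (spE n x q)
      = spAlt n x (spTwoRow n a b) := by
  subst hpa hqb
  exact (spAlt_twoRow hn a b).symm

private lemma spT_neg (hn : 2 ≤ n) : spAlt n x (spTwoRow n (-1) 0) = 0 := by
  have h01 : (⟨0, by omega⟩ : Fin n) ≠ (⟨1, by omega⟩ : Fin n) := by
    intro hh; have := congrArg Fin.val hh; simp at this
  rw [spAlt_twoRow hn]
  rw [spE_congr (show (-1:ℤ)+(n:ℤ) = 0+(n:ℤ)-1 by ring)]
  exact DD_self _ h01 _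

private lemma spPL (hn : 2 ≤ n) (a b : ℤ) :
    spAlt n x (spTwoRow n a b) * spAlt n x (spTwoRow n 0 0)
      - spAlt n x (spTwoRow n a 1) * spAlt n x (spTwoRow n (b-1) 0)
      + spAlt n x (spTwoRow n a 0) * spAlt n x (spTwoRow n (b-1) 1) = 0 := by
  have h01 : (⟨0, by omega⟩ : Fin n) ≠ (⟨1, by omega⟩ : Fin n) := by
    intro hh; have := congrArg Fin.val hh; simp at this
  have hp := plucker (spBase n x) h01 (spE n x (a + (n:ℤ))) (spE n x (b + (n:ℤ) - 1))
      (spE n x ((0:ℤ) + (n:ℤ))) (spE n x ((0:ℤ) + (n:ℤ) - 1))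
  rw [bridge' hn (a+(n:ℤ)) (b+(n:ℤ)-1) a b rfl rfl,
      bridge' hn ((0:ℤ)+(n:ℤ)) ((0:ℤ)+(n:ℤ)-1) 0 0 rfl rfl,
      bridge' hn (a+(n:ℤ)) ((0:ℤ)+(n:ℤ)) a 1 rfl (by ring),
      bridge' hn (b+(n:ℤ)-1) ((0:ℤ)+(n:ℤ)-1) (b-1) 0 (by ring) (by ring),
      bridge' hn (a+(n:ℤ)) ((0:ℤ)+(n:ℤ)-1) a 0 rfl (by ring),
      bridge' hn (b+(n:ℤ)-1) ((0:ℤ)+(n:ℤ)) (b-1) 1 (by ring) (by ring)] at hp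
  linear_combination hp

private lemma spMain (hn : 2 ≤ n) (hx : ∀ i, x i ≠ 0) :
    ∀ (jj k : ℕ), jj ≤ k →
    spAlt n x (spTwoRow n (k:ℤ) 0) * spAlt n x (spTwoRow n (jj:ℤ) 0)
      = spAlt n x (spTwoRow n ((k:ℤ)-1) 0) * spAlt n x (spTwoRow n ((jj:ℤ)-1) 0)
        + spAlt n x (spTwoRow n 0 0) *
          ∑ p ∈ Finset.range (jj+1),
            spAlt n x (spTwoRow n ((k:ℤ)+(jj:ℤ)-(p:ℤ)) (p:ℤ)) := by
  intro jj
  induction jj with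
  | zero =>
    intro k _
    simp only [Nat.cast_zero, zero_add, Finset.sum_range_one]
    rw [spT_congr (show (0:ℤ)-1 = -1 by ring) rfl, spT_neg hn,
        spT_congr (show (k:ℤ)+0-0 = (k:ℤ) by ring) rfl]
    ring
  | succ jj IH =>
    intro k hk
    have ih := IH (k+1) (by omega)
    have pl := spPL (x := x) hn (k:ℤ) ((jj:ℤ)+1)
    have r1k := spR1 hn hx (k:ℤ)
    have r1j := spR1 hn hx (jj:ℤ)
    -- normalize casts in ih
    rw [show ((k+1:ℕ):ℤ) = (k:ℤ)+1 by push_cast; ring] at ih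
    rw [spT_congr (show ((k:ℤ)+1)-1 = (k:ℤ) by ring) rfl] at ih
    -- normalize pl
    rw [spT_congr (show ((jj:ℤ)+1)-1 = (jj:ℤ) by ring) (rfl : (0:ℤ) = 0)] at pl
    rw [spT_congr (show ((jj:ℤ)+1)-1 = (jj:ℤ) by ring) (rfl : (1:ℤ) = 1)] at pl
    -- normalize goal
    rw [show ((jj+1:ℕ):ℤ) = (jj:ℤ)+1 by push_cast; ring]
    rw [spT_congr (show ((jj:ℤ)+1)-1 = (jj:ℤ) by ring) rfl]
    rw [Finset.sum_range_succ]
    rw [show ((jj+1:ℕ):ℤ) = (jj:ℤ)+1 by push_cast; ring]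
    rw [spT_congr (show (k:ℤ)+((jj:ℤ)+1)-((jj:ℤ)+1) = (k:ℤ) by ring)
        (rfl : ((jj:ℤ)+1) = (jj:ℤ)+1)]
    have hsum : (∑ p ∈ Finset.range (jj+1),
          spAlt n x (spTwoRow n ((k:ℤ)+((jj:ℤ)+1)-(p:ℤ)) (p:ℤ)))
        = ∑ p ∈ Finset.range (jj+1),
            spAlt n x (spTwoRow n (((k:ℤ)+1)+(jj:ℤ)-(p:ℤ)) (p:ℤ)) :=
      Finset.sum_congr rfl fun p _ => spT_congr (by ring) rfl
    rw [hsum]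
    linear_combination ih - pl + spAlt n x (spTwoRow n (k:ℤ) 0) * r1j
      - spAlt n x (spTwoRow n (jj:ℤ) 0) * r1k

end SpLayer

/-- Alternant form of the `Sp_{2n}(ℂ)` character identity
`χ^{Sp}(k̄) χ^{Sp}(j̄) = χ^{Sp}(k−1) χ^{Sp}(j−1) + Σ_{p=0}^{min(k,j)} χ^{Sp}(k+j−p, p)`
for `k, j ≥ 1`, after clearing the Weyl denominators. -/
theorem sp_one_row_product (n : ℕ) (hn : 2 ≤ n) (k j : ℕ) (hk : 1 ≤ k) (hj : 1 ≤ j)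
    (x : Fin n → ℂ) (hx : ∀ i, x i ≠ 0) :
    spAlt n x (spTwoRow n (k : ℤ) 0) * spAlt n x (spTwoRow n (j : ℤ) 0) =
      spAlt n x (spTwoRow n ((k : ℤ) - 1) 0) * spAlt n x (spTwoRow n ((j : ℤ) - 1) 0) +
        spAlt n x (spTwoRow n 0 0) *
          ∑ p ∈ Finset.range (min k j + 1),
            spAlt n x (spTwoRow n ((k : ℤ) + (j : ℤ) - (p : ℤ)) (p : ℤ)) := by
  rcases le_total j k with h | h
  · rw [min_eq_right h]
    exact spMain hn hx j k h
  · rw [min_eq_left h]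
    have hm := spMain hn hx k j h
    have hs : (∑ p ∈ Finset.range (k+1),
          spAlt n x (spTwoRow n ((j:ℤ)+(k:ℤ)-(p:ℤ)) (p:ℤ)))
        = ∑ p ∈ Finset.range (k+1),
            spAlt n x (spTwoRow n ((k:ℤ)+(j:ℤ)-(p:ℤ)) (p:ℤ)) :=
      Finset.sum_congr rfl fun p _ => spT_congr (by ring) rfl
    rw [hs] at hm
    linear_combination hm
end
end

section
/- The embedding j₂ : G(SL_2 × SL_2) → GSp_4(F) sending (g₁, g₂) with g₁ = [[a₁,b₁],[c₁,d₁]] to the 4×4 matrix [[a₁,0,0,b₁],[0,g₂,0],[c₁,0,0,d₁]] (with g₂ in the central 2×2 block) is an injective group homomorphism into GSp_4(F), where G(SL_2 × SL_2) = {(g₁,g₂) ∈ GL_2(F)² : det g₁ = det g₂}, and the similitude of j₂(g₁,g₂) equals det g₁. -/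
open Matrix

noncomputable section

/-- `j₄ = [[0,−w₂],[w₂,0]]`. -/
def J4 (F : Type*) [Field F] : Matrix (Fin 4) (Fin 4) F :=
  !![0, 0, 0, -1; 0, 0, -1, 0; 0, 1, 0, 0; 1, 0, 0, 0]

/-- The embedding `j₂(g₁, g₂)` placing the entries of `g₁` at the four corners and
`g₂` in the central `2 × 2` block. -/
def J2emb {F : Type*} [Field F] (g₁ g₂ : Matrix (Fin 2) (Fin 2) F) :
    Matrix (Fin 4) (Fin 4) F :=
  Matrix.of fun i j =>
    if (i : ℕ) = 0 ∧ (j : ℕ) = 0 then g₁ 0 0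
    else if (i : ℕ) = 0 ∧ (j : ℕ) = 3 then g₁ 0 1
    else if (i : ℕ) = 3 ∧ (j : ℕ) = 0 then g₁ 1 0
    else if (i : ℕ) = 3 ∧ (j : ℕ) = 3 then g₁ 1 1
    else if hm : (1 ≤ (i : ℕ) ∧ (i : ℕ) ≤ 2) ∧ (1 ≤ (j : ℕ) ∧ (j : ℕ) ≤ 2) then
      g₂ ⟨(i : ℕ) - 1, by omega⟩ ⟨(j : ℕ) - 1, by omega⟩
    else 0

lemma J2emb_eq {F : Type*} [Field F] (g₁ g₂ : Matrix (Fin 2) (Fin 2) F) :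
    J2emb g₁ g₂ = !![g₁ 0 0, 0, 0, g₁ 0 1;
                     0, g₂ 0 0, g₂ 0 1, 0;
                     0, g₂ 1 0, g₂ 1 1, 0;
                     g₁ 1 0, 0, 0, g₁ 1 1] := by
  ext i j
  fin_cases i <;> fin_cases j <;> simp [J2emb] <;> first | rfl | (intro h; omega)


lemma trans_fin_four {F : Type*} [Field F]
    (a b c d e f g h i j k l m n o p : F) :
    (!![a,b,c,d; e,f,g,h; i,j,k,l; m,n,o,p])ᵀ =
      !![a,e,i,m; b,f,j,n; c,g,k,o; d,h,l,p] := by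
  ext x y
  fin_cases x <;> fin_cases y <;> rfl

set_option maxHeartbeats 1000000 in
/-- `j₂ : G(SL₂ × SL₂) → GSp₄(F)` is an injective group homomorphism, where
`G(SL₂ × SL₂) = {(g₁,g₂) : det g₁ = det g₂}`, and the similitude of `j₂(g₁,g₂)`
equals `det g₁`. -/
theorem J2emb_injective_hom_into_GSp4 {F : Type*} [Field F] :
    -- injectivity
    (∀ g₁ g₂ h₁ h₂ : Matrix (Fin 2) (Fin 2) F,
        g₁.det = g₂.det → h₁.det = h₂.det →
        J2emb g₁ g₂ = J2emb h₁ h₂ → g₁ = h₁ ∧ g₂ = h₂) ∧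
    -- multiplicativity on G(SL₂ × SL₂)
    (∀ g₁ g₂ h₁ h₂ : Matrix (Fin 2) (Fin 2) F,
        g₁.det = g₂.det → h₁.det = h₂.det →
        J2emb (g₁ * h₁) (g₂ * h₂) = J2emb g₁ g₂ * J2emb h₁ h₂) ∧
    -- the image lies in GSp₄ with similitude det g₁
    (∀ g₁ g₂ : Matrix (Fin 2) (Fin 2) F, IsUnit g₁.det →
        g₁.det = g₂.det →
        (J2emb g₁ g₂)ᵀ * J4 F * J2emb g₁ g₂ = g₁.det • J4 F) := by
  refine ⟨?_, ?_, ?_⟩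
  · intro g₁ g₂ h₁ h₂ _ _ h
    rw [J2emb_eq, J2emb_eq] at h
    have e := fun i j => congrFun (congrFun h i) j
    constructor <;> ext i j <;> fin_cases i <;> fin_cases j
    · simpa using e 0 0
    · simpa using e 0 3
    · simpa using e 3 0
    · simpa using e 3 3
    · simpa using e 1 1
    · simpa using e 1 2
    · simpa using e 2 1
    · simpa using e 2 2
  · intro g₁ g₂ h₁ h₂ _ _
    rw [J2emb_eq, J2emb_eq, J2emb_eq]
    ext i j
    fin_cases i <;> fin_cases j <;>
      simp [Matrix.mul_apply, Fin.sum_univ_four]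
  · intro g₁ g₂ _ hdet
    rw [Matrix.det_fin_two g₁, Matrix.det_fin_two g₂] at hdet
    have hs : g₁.det • J4 F =
        !![0, 0, 0, -(g₁ 0 0 * g₁ 1 1 - g₁ 0 1 * g₁ 1 0);
           0, 0, -(g₁ 0 0 * g₁ 1 1 - g₁ 0 1 * g₁ 1 0), 0;
           0, g₁ 0 0 * g₁ 1 1 - g₁ 0 1 * g₁ 1 0, 0, 0;
           g₁ 0 0 * g₁ 1 1 - g₁ 0 1 * g₁ 1 0, 0, 0, 0] := by
      rw [Matrix.det_fin_two]
      ext i j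
      fin_cases i <;> fin_cases j <;>
        simp [J4, Matrix.smul_apply, smul_eq_mul, Matrix.vecHead, Matrix.vecTail]
    rw [J2emb_eq, trans_fin_four, hs]
    ext i j
    fin_cases i <;> fin_cases j <;>
      simp [Matrix.mul_apply, Fin.sum_univ_four, J4, Matrix.vecHead, Matrix.vecTail] <;>
      (first
        | linear_combination hdet
        | linear_combination -hdet
        | linear_combination 2*hdet
        | linear_combination -2*hdet
        | ring1)
end
end
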